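/- arXiv:2307.12466 — 2 statements merged into one kernel-verified Lean document; each statement's English description precedes it below -/
import Mathlib

section
/- Let Ω ⊆ ℝ^{n+1} be open, A : Ω → (symmetric (n+1)×(n+1) real matrices) be C¹, u₁, u₂ : Ω → ℝ be C², f⃗₁, f⃗₂ : Ω → ℝ^{n+1} be C¹, and φ₁, φ₂ : Ω → ℝ be continuous. Assume u₂(x) ≠ 0 for all x ∈ Ω and that div(A∇u_i) = div(f⃗_i) + φ_i pointwise on Ω for i = 1,2. Then the ratio w = u₁/u₂ satisfies, pointwise on Ω, div(u₂² A∇w) = div(u₂ f⃗₁ − u₁ f⃗₂) + (f⃗₂ · ∇u₁ − f⃗₁ · ∇u₂) + (u₂ φ₁ − u₁ φ₂). -/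
/-!
Near every point of `Ω` the quotient rule gives `u₂² ∇w = u₂ ∇u₁ - u₁ ∇u₂`, so
`u₂² A∇w = u₂ A∇u₁ - u₁ A∇u₂`. Expanding the divergence of this field and of `u₂ f⃗₁ - u₁ f⃗₂`
by the product rule `div (p V) = ∇p · V + p div V`, the cross terms `∇u₂ · A∇u₁` and
`∇u₁ · A∇u₂` cancel because `A` is symmetric, and what remains is `u₂` times the equation
for `u₁` minus `u₁` times the equation for `u₂`.
-/

open MeasureTheory Metric Set
open scoped ContDiff

noncomputable section

/-- Ambient space `ℝ^{n+1}`. -/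
abbrev E (n : ℕ) := EuclideanSpace ℝ (Fin (n + 1))

/-- Partial derivative `∂_i f` of a scalar function. -/
def pd (n : ℕ) (f : E n → ℝ) (i : Fin (n + 1)) (x : E n) : ℝ :=
  fderiv ℝ f x (EuclideanSpace.single i 1)

/-- Divergence `div V = ∑ i ∂_i V_i` of a vector field. -/
def vdiv (n : ℕ) (V : E n → Fin (n + 1) → ℝ) (x : E n) : ℝ :=
  ∑ i, fderiv ℝ (fun y => V y i) x (EuclideanSpace.single i 1)

open Filter Topology
open scoped Matrix

theorem Matrix.IsSymm.dotProduct_mulVec_comm {ι R : Type*} [Fintype ι] [CommSemiring R]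
    {M : Matrix ι ι R} (hM : M.IsSymm) (v w : ι → R) : v ⬝ᵥ M *ᵥ w = w ⬝ᵥ M *ᵥ v := by
  conv_lhs => rw [← hM.eq]
  exact dotProduct_transpose_mulVec M v w

section Calculus

variable {n : ℕ} {x : E n}

theorem ContDiffAt.differentiableAt_pd {u : E n → ℝ} (hu : ContDiffAt ℝ 2 u x)
    (j : Fin (n + 1)) : DifferentiableAt ℝ (pd n u j) x :=
  ((hu.fderiv_right (m := 1) le_rfl).clm_apply contDiffAt_const).differentiableAt one_ne_zero

theorem sq_mul_pd_div {u₁ u₂ : E n → ℝ} (h₁ : DifferentiableAt ℝ u₁ x)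
    (h₂ : DifferentiableAt ℝ u₂ x) (hne : u₂ x ≠ 0) (j : Fin (n + 1)) :
    u₂ x ^ 2 * pd n (fun z => u₁ z / u₂ z) j x = u₂ x * pd n u₁ j x - u₁ x * pd n u₂ j x := by
  have hdiv : HasFDerivAt (fun z => u₁ z / u₂ z)
      (u₁ x • (-(u₂ x ^ 2)⁻¹) • fderiv ℝ u₂ x + (u₂ x)⁻¹ • fderiv ℝ u₁ x) x := by
    simpa only [div_eq_mul_inv, Function.comp_apply] using
      h₁.hasFDerivAt.fun_mul ((hasDerivAt_inv hne).comp_hasFDerivAt x h₂.hasFDerivAt)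
  simp only [pd, hdiv.fderiv, add_apply, smul_apply, smul_eq_mul]
  field_simp
  ring

theorem vdiv_congr {V W : E n → Fin (n + 1) → ℝ} (h : V =ᶠ[𝓝 x] W) :
    vdiv n V x = vdiv n W x := by
  refine Finset.sum_congr rfl fun i _ => ?_
  have hi : (fun y => V y i) =ᶠ[𝓝 x] fun y => W y i := h.mono fun y hy => congrFun hy i
  rw [hi.fderiv_eq]

theorem vdiv_sub {V W : E n → Fin (n + 1) → ℝ}
    (hV : ∀ i, DifferentiableAt ℝ (fun y => V y i) x)
    (hW : ∀ i, DifferentiableAt ℝ (fun y => W y i) x) :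
    vdiv n (fun y i => V y i - W y i) x = vdiv n V x - vdiv n W x := by
  simp only [vdiv, ← Finset.sum_sub_distrib]
  refine Finset.sum_congr rfl fun i _ => ?_
  rw [fderiv_fun_sub (hV i) (hW i), sub_apply]

theorem vdiv_mul {p : E n → ℝ} {V : E n → Fin (n + 1) → ℝ} (hp : DifferentiableAt ℝ p x)
    (hV : ∀ i, DifferentiableAt ℝ (fun y => V y i) x) :
    vdiv n (fun y i => p y * V y i) x = ∑ i, pd n p i x * V x i + p x * vdiv n V x := by
  simp only [vdiv, Finset.mul_sum, ← Finset.sum_add_distrib]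
  refine Finset.sum_congr rfl fun i _ => ?_
  rw [fderiv_fun_mul hp (hV i)]
  simp only [pd, add_apply, smul_apply, smul_eq_mul]
  ring

theorem vdiv_mul_sub_mul {p q : E n → ℝ} {V W : E n → Fin (n + 1) → ℝ}
    (hp : DifferentiableAt ℝ p x) (hq : DifferentiableAt ℝ q x)
    (hV : ∀ i, DifferentiableAt ℝ (fun y => V y i) x)
    (hW : ∀ i, DifferentiableAt ℝ (fun y => W y i) x) :
    vdiv n (fun y i => p y * V y i - q y * W y i) x =
      ∑ i, pd n p i x * V x i + p x * vdiv n V x - (∑ i, pd n q i x * W x i + q x * vdiv n W x) := by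
  rw [vdiv_sub (V := fun y i => p y * V y i) (W := fun y i => q y * W y i)
    (fun i => hp.mul (hV i)) (fun i => hq.mul (hW i)), vdiv_mul hp hV, vdiv_mul hq hW]

end Calculus

theorem stmt0_general (n : ℕ) (Ω : Set (E n)) (hΩ : IsOpen Ω)
    (A : E n → Matrix (Fin (n + 1)) (Fin (n + 1)) ℝ)
    (u₁ u₂ : E n → ℝ) (f₁ f₂ : E n → Fin (n + 1) → ℝ) (φ₁ φ₂ : E n → ℝ)
    (hAsymm : ∀ x ∈ Ω, (A x).IsSymm)
    (hA : ∀ i j, ContDiffOn ℝ 1 (fun x => A x i j) Ω)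
    (hu₁ : ContDiffOn ℝ 2 u₁ Ω) (hu₂ : ContDiffOn ℝ 2 u₂ Ω)
    (hf₁ : ∀ i, ContDiffOn ℝ 1 (fun x => f₁ x i) Ω)
    (hf₂ : ∀ i, ContDiffOn ℝ 1 (fun x => f₂ x i) Ω)
    (hu₂ne : ∀ x ∈ Ω, u₂ x ≠ 0)
    (heq₁ : ∀ x ∈ Ω,
      vdiv n (fun y i => ∑ j, A y i j * pd n u₁ j y) x = vdiv n f₁ x + φ₁ x)
    (heq₂ : ∀ x ∈ Ω,
      vdiv n (fun y i => ∑ j, A y i j * pd n u₂ j y) x = vdiv n f₂ x + φ₂ x) :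
    ∀ x ∈ Ω,
      vdiv n (fun y i => (u₂ y) ^ 2 * ∑ j, A y i j * pd n (fun z => u₁ z / u₂ z) j y) x =
        vdiv n (fun y i => u₂ y * f₁ y i - u₁ y * f₂ y i) x +
          ((∑ i, f₂ x i * pd n u₁ i x) - ∑ i, f₁ x i * pd n u₂ i x) +
          (u₂ x * φ₁ x - u₁ x * φ₂ x) := by
  intro x hx
  have hΩx := hΩ.mem_nhds hx
  have hdu₁ := (hu₁.contDiffAt hΩx).differentiableAt two_ne_zero
  have hdu₂ := (hu₂.contDiffAt hΩx).differentiableAt two_ne_zero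
  have hdf₁ i := ((hf₁ i).contDiffAt hΩx).differentiableAt one_ne_zero
  have hdf₂ i := ((hf₂ i).contDiffAt hΩx).differentiableAt one_ne_zero
  have hdA i j := ((hA i j).contDiffAt hΩx).differentiableAt one_ne_zero
  have hdpd₁ := (hu₁.contDiffAt hΩx).differentiableAt_pd
  have hdpd₂ := (hu₂.contDiffAt hΩx).differentiableAt_pd
  have hratio : (fun y i => u₂ y ^ 2 * ∑ j, A y i j * pd n (fun z => u₁ z / u₂ z) j y) =ᶠ[𝓝 x]
      fun y i => u₂ y * ∑ j, A y i j * pd n u₁ j y - u₁ y * ∑ j, A y i j * pd n u₂ j y := by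
    filter_upwards [hΩx] with y hy
    ext i
    have hΩy := hΩ.mem_nhds hy
    simp only [Finset.mul_sum, ← Finset.sum_sub_distrib]
    refine Finset.sum_congr rfl fun j _ => ?_
    linear_combination A y i j * sq_mul_pd_div ((hu₁.contDiffAt hΩy).differentiableAt two_ne_zero)
      ((hu₂.contDiffAt hΩy).differentiableAt two_ne_zero) (hu₂ne y hy) j
  have hsym := (hAsymm x hx).dotProduct_mulVec_comm (fun i => pd n u₂ i x) (fun i => pd n u₁ i x)
  simp only [dotProduct, Matrix.mulVec] at hsym
  rw [vdiv_congr hratio, vdiv_mul_sub_mul hdu₂ hdu₁ (by fun_prop) (by fun_prop),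
    vdiv_mul_sub_mul hdu₂ hdu₁ hdf₁ hdf₂, heq₁ x hx, heq₂ x hx]
  simp only [mul_comm (f₁ x _), mul_comm (f₂ x _)]
  linear_combination hsym

/-- Lemma: equation satisfied by the ratio.
If `div(A∇uᵢ) = div(f⃗ᵢ) + φᵢ` on an open set `Ω` where `u₂ ≠ 0`, then the ratio
`w = u₁/u₂` satisfies
`div(u₂² A∇w) = div(u₂f⃗₁ − u₁f⃗₂) + (f⃗₂·∇u₁ − f⃗₁·∇u₂) + (u₂φ₁ − u₁φ₂)` pointwise on `Ω`. -/
theorem stmt0 (n : ℕ) (Ω : Set (E n)) (hΩ : IsOpen Ω)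
    (A : E n → Matrix (Fin (n + 1)) (Fin (n + 1)) ℝ)
    (u₁ u₂ : E n → ℝ) (f₁ f₂ : E n → Fin (n + 1) → ℝ) (φ₁ φ₂ : E n → ℝ)
    (hAsymm : ∀ x ∈ Ω, (A x).IsSymm)
    (hA : ∀ i j, ContDiffOn ℝ 1 (fun x => A x i j) Ω)
    (hu₁ : ContDiffOn ℝ 2 u₁ Ω) (hu₂ : ContDiffOn ℝ 2 u₂ Ω)
    (hf₁ : ∀ i, ContDiffOn ℝ 1 (fun x => f₁ x i) Ω)
    (hf₂ : ∀ i, ContDiffOn ℝ 1 (fun x => f₂ x i) Ω)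
    (hφ₁ : ContinuousOn φ₁ Ω) (hφ₂ : ContinuousOn φ₂ Ω)
    (hu₂ne : ∀ x ∈ Ω, u₂ x ≠ 0)
    (heq₁ : ∀ x ∈ Ω,
      vdiv n (fun y i => ∑ j, A y i j * pd n u₁ j y) x = vdiv n f₁ x + φ₁ x)
    (heq₂ : ∀ x ∈ Ω,
      vdiv n (fun y i => ∑ j, A y i j * pd n u₂ j y) x = vdiv n f₂ x + φ₂ x) :
    ∀ x ∈ Ω,
      vdiv n (fun y i => (u₂ y) ^ 2 * ∑ j, A y i j * pd n (fun z => u₁ z / u₂ z) j y) x =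
        vdiv n (fun y i => u₂ y * f₁ y i - u₁ y * f₂ y i) x +
          ((∑ i, f₂ x i * pd n u₁ i x) - ∑ i, f₁ x i * pd n u₂ i x) +
          (u₂ x * φ₁ x - u₁ x * φ₂ x) :=
  stmt0_general n Ω hΩ A u₁ u₂ f₁ f₂ φ₁ φ₂ hAsymm hA hu₁ hu₂ hf₁ hf₂ hu₂ne heq₁ heq₂
end
end

section
/- Let Ā be a constant symmetric positive-definite (n+1)×(n+1) matrix with Ā^{i,n+1} = Ā^{n+1,i} = 0 for all i ≤ n, let κ = (Ā^{nn}/Ā^{n+1,n+1})^{1/2}, and define ū_Ā(x) = √((x_n + √(x_n² + κ² x_{n+1}²))/2). Then: (i) ū_Ā is C^∞ on ℝ^{n+1} \ S̄ and Σ_{i,j} Ā^{ij} ∂_i∂_j ū_Ā = 0 there; (ii) ū_Ā(x) > 0 for x ∉ S̄ and ū_Ā(x) = 0 for x ∈ S̄; (iii) ū_Ā(x^T, t·x^⊥) = t^{1/2} ū_Ā(x^T, x^⊥) for every t > 0. -/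
open MeasureTheory Metric Set
open scoped ContDiff

noncomputable section

/-- Index of the paper's coordinate `x_n`. -/
def idxN (n : ℕ) : Fin (n + 1) := ⟨n - 1, by omega⟩
/-- Index of the paper's coordinate `x_{n+1}`. -/
def idxN1 (n : ℕ) : Fin (n + 1) := ⟨n, by omega⟩

/-- The closed slit `S̄ = {x_n ≤ 0, x_{n+1} = 0}`. -/
def closedSlit (n : ℕ) : Set (E n) := {x | x (idxN n) ≤ 0 ∧ x (idxN1 n) = 0}

/-- `κ(Ā) = (Ā^{nn}/Ā^{n+1,n+1})^{1/2}`. -/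
def kappa (n : ℕ) (A : Matrix (Fin (n + 1)) (Fin (n + 1)) ℝ) : ℝ :=
  Real.sqrt (A (idxN n) (idxN n) / A (idxN1 n) (idxN1 n))

/-- The `1/2`-homogeneous solution `ū_Ā(x) = √((x_n + √(x_n² + κ²x_{n+1}²))/2)`. -/
def ubar (n : ℕ) (κ : ℝ) (x : E n) : ℝ :=
  Real.sqrt ((x (idxN n) + Real.sqrt ((x (idxN n)) ^ 2 + κ ^ 2 * (x (idxN1 n)) ^ 2)) / 2)

/-- The point `(x^T, t·x^⊥)`: same first `n-1` coordinates, last two scaled by `t`. -/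
def scalePerp (n : ℕ) (t : ℝ) (x : E n) : E n :=
  WithLp.toLp 2 (fun i : Fin (n + 1) => if (i : ℕ) < n - 1 then x i else t * x i)

/-! On the complement of the slit, `ū` is the real part of the principal square root of
`x_n + iκ x_{n+1}`, which is holomorphic there, so `ū` is smooth and `Re √·` is harmonic. Under the
real-linear map `x ↦ x_n + iκ x_{n+1}` only the entries `Ā^{ab}` with `a, b ∈ {n, n+1}` see second
derivatives, and since `Ā^{n,n+1} = Ā^{n+1,n} = 0` and `Ā^{nn} = κ² Ā^{n+1,n+1}` the operator
`∑ Ā^{ij} ∂_i ∂_j` becomes `κ² Ā^{n+1,n+1}` times the Laplacian of `Re √·`. Positivity and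
homogeneity follow from `Re √z = √((|z| + Re z)/2)`. -/

open Complex Filter Topology InnerProductSpace

section SecondDerivative

variable {V W F : Type*} [NormedAddCommGroup V] [NormedSpace ℝ V] [NormedAddCommGroup W]
  [NormedSpace ℝ W] [NormedAddCommGroup F] [NormedSpace ℝ F]

theorem fderiv_fderiv_comp_clm_apply {g : W → F} (L : V →L[ℝ] W) {x : V}
    (hg : ContDiffAt ℝ 2 g (L x)) (v w : V) :
    fderiv ℝ (fun y => fderiv ℝ (g ∘ L) y v) x w = fderiv ℝ (fderiv ℝ g) (L x) (L w) (L v) := by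
  have hdiff : ∀ᶠ y in 𝓝 x, DifferentiableAt ℝ g (L y) :=
    (L.continuous.tendsto x).eventually
      ((hg.eventually (by simp)).mono fun z hz => hz.differentiableAt (by norm_num))
  have hcomp : (fun y => fderiv ℝ (g ∘ L) y v) =ᶠ[𝓝 x] fun y => fderiv ℝ g (L y) (L v) := by
    filter_upwards [hdiff] with y hy
    rw [fderiv_comp y hy L.differentiableAt, L.fderiv]
    rfl
  have hD : DifferentiableAt ℝ (fderiv ℝ g) (L x) :=
    (hg.fderiv_right (m := 1) (by norm_num)).differentiableAt (by norm_num)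
  rw [hcomp.fderiv_eq,
    fderiv_fun_comp x (hD.clm_apply (differentiableAt_const _)) L.differentiableAt,
    fderiv_clm_apply hD (differentiableAt_const _)]
  simp

end SecondDerivative

theorem Matrix.sum_sum_mul_bilin_of_support_pair {ι V : Type*} [Fintype ι]
    [NormedAddCommGroup V] [NormedSpace ℝ V] (A : Matrix ι ι ℝ) (B : V →L[ℝ] V →L[ℝ] ℝ)
    (f : ι → V) {a b : ι} (hab : a ≠ b) (hf : ∀ k, k ≠ a ∧ k ≠ b → f k = 0) :
    ∑ i, ∑ j, A i j * B (f i) (f j) =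
      A a a * B (f a) (f a) + A a b * B (f a) (f b) +
        (A b a * B (f b) (f a) + A b b * B (f b) (f b)) := by
  have hrow (i : ι) :
      ∑ j, A i j * B (f i) (f j) = A i a * B (f i) (f a) + A i b * B (f i) (f b) :=
    Fintype.sum_eq_add a b hab fun j hj => by simp [hf j hj]
  rw [Fintype.sum_congr _ _ hrow, Fintype.sum_eq_add a b hab fun i hi => by simp [hf i hi]]

section SlitCoordinate

variable {n : ℕ} {κ : ℝ}

def slitCoord (n : ℕ) (κ : ℝ) : E n →L[ℝ] ℂ :=
  (EuclideanSpace.proj (idxN n)).smulRight (1 : ℂ) +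
    (EuclideanSpace.proj (idxN1 n)).smulRight ((κ : ℂ) * I)

theorem slitCoord_apply (x : E n) : slitCoord n κ x = x (idxN n) + κ * x (idxN1 n) * I := by
  simp only [slitCoord, add_apply, ContinuousLinearMap.smulRight_apply, PiLp.proj_apply,
    real_smul, mul_one, add_right_inj]
  ring

theorem ubar_eq_re_sqrt_comp_slitCoord (n : ℕ) (κ : ℝ) :
    ubar n κ = (re ∘ Complex.sqrt) ∘ slitCoord n κ := by
  funext x
  rw [Function.comp_apply, Function.comp_apply, Complex.sqrt, cpow_inv_two_re, slitCoord_apply,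
    ← ofReal_mul, norm_add_mul_I]
  simp [ubar, add_comm, mul_pow]

theorem slitCoord_mem_slitPlane_iff (hκ : 0 < κ) {x : E n} :
    slitCoord n κ x ∈ slitPlane ↔ x ∉ closedSlit n := by
  simp [slitCoord_apply, mem_slitPlane_iff, closedSlit, hκ.ne', imp_iff_not_or]

theorem slitCoord_scalePerp (t : ℝ) (x : E n) :
    slitCoord n κ (scalePerp n t x) = t • slitCoord n κ x := by
  have hN : ¬ ((idxN n : ℕ) < n - 1) := by simp [idxN]
  have hN1 : ¬ ((idxN1 n : ℕ) < n - 1) := by simp [idxN1]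
  simp only [scalePerp, slitCoord_apply, hN, hN1, ↓reduceIte, ofReal_mul, smul_add, real_smul,
    add_right_inj]
  ring

end SlitCoordinate

namespace Complex

theorem analyticAt_sqrt {z : ℂ} (hz : z ∈ slitPlane) : AnalyticAt ℂ Complex.sqrt z :=
  analyticAt_id.cpow analyticAt_const hz

theorem re_sqrt_pos_iff {z : ℂ} : 0 < (Complex.sqrt z).re ↔ z ∈ slitPlane := by
  rw [Complex.sqrt, cpow_inv_two_re, Real.sqrt_pos, div_pos_iff_of_pos_right two_pos,
    mem_slitPlane_iff, ← abs_re_lt_norm]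
  constructor
  · intro h
    by_contra! hle
    linarith [abs_of_nonpos hle.1, hle.2]
  · rintro (h | h)
    · linarith [norm_nonneg z]
    · linarith [neg_abs_le z.re]

theorem re_sqrt_eq_zero_of_notMem_slitPlane {z : ℂ} (hz : z ∉ slitPlane) :
    (Complex.sqrt z).re = 0 := by
  refine le_antisymm (not_lt.1 (mt re_sqrt_pos_iff.1 hz)) ?_
  rw [Complex.sqrt, cpow_inv_two_re]
  exact Real.sqrt_nonneg _

theorem re_sqrt_real_smul {t : ℝ} (ht : 0 ≤ t) (z : ℂ) :
    (Complex.sqrt (t • z)).re = √t * (Complex.sqrt z).re := by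
  simp only [Complex.sqrt, cpow_inv_two_re, norm_smul, smul_re, Real.norm_of_nonneg ht,
    smul_eq_mul]
  rw [← Real.sqrt_mul ht]
  ring_nf

end Complex

section AnisotropicLaplacian

variable {n : ℕ} {κ : ℝ}

theorem sum_mul_fderiv_pd_comp_slitCoord_eq_zero {h : ℂ → ℝ} {x : E n}
    (hh : HarmonicAt h (slitCoord n κ x)) (hne : idxN n ≠ idxN1 n)
    {A : Matrix (Fin (n + 1)) (Fin (n + 1)) ℝ}
    (hAnn : A (idxN n) (idxN n) = κ ^ 2 * A (idxN1 n) (idxN1 n))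
    (hAnm : A (idxN n) (idxN1 n) = 0) (hAmn : A (idxN1 n) (idxN n) = 0) :
    ∑ i, ∑ j, A i j *
      fderiv ℝ (fun y => pd n (h ∘ slitCoord n κ) j y) x (EuclideanSpace.single i 1) = 0 := by
  simp only [pd, fderiv_fderiv_comp_clm_apply _ hh.1]
  rw [Matrix.sum_sum_mul_bilin_of_support_pair A _
    (fun i => slitCoord n κ (EuclideanSpace.single i 1)) hne]
  · have hΔ := hh.2.self_of_nhds
    simp only [laplacian_eq_iteratedFDeriv_complexPlane, iteratedFDeriv_two_apply,
      Matrix.cons_val_zero, Matrix.cons_val_one, Pi.zero_apply] at hΔ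
    have he : slitCoord n κ (EuclideanSpace.single (idxN n) 1) = 1 := by
      simp [slitCoord_apply, hne]
    have he' : slitCoord n κ (EuclideanSpace.single (idxN1 n) 1) = κ • I := by
      simp [slitCoord_apply, hne.symm, real_smul]
    rw [he, he', hAnm, hAmn, hAnn]
    simp only [map_smul, smul_apply, smul_eq_mul]
    linear_combination κ ^ 2 * A (idxN1 n) (idxN1 n) * hΔ
  · rintro k ⟨hka, hkb⟩
    simp [slitCoord_apply, hka.symm, hkb.symm]

end AnisotropicLaplacian

section Ubar

variable {n : ℕ} {κ : ℝ}

theorem contDiffOn_ubar (hκ : 0 < κ) : ContDiffOn ℝ ∞ (ubar n κ) (closedSlit n)ᶜ := by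
  intro x hx
  have hsqrt := analyticAt_sqrt ((slitCoord_mem_slitPlane_iff hκ).2 hx)
  rw [ubar_eq_re_sqrt_comp_slitCoord]
  exact ((reCLM.contDiff.contDiffAt.comp _ (hsqrt.contDiffAt.restrict_scalars ℝ)).comp x
    (slitCoord n κ).contDiff.contDiffAt).contDiffWithinAt

theorem ubar_pos (hκ : 0 < κ) {x : E n} (hx : x ∉ closedSlit n) : 0 < ubar n κ x := by
  rw [ubar_eq_re_sqrt_comp_slitCoord]
  exact re_sqrt_pos_iff.2 ((slitCoord_mem_slitPlane_iff hκ).2 hx)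

theorem ubar_eq_zero {x : E n} (hx : x ∈ closedSlit n) : ubar n κ x = 0 := by
  rw [ubar_eq_re_sqrt_comp_slitCoord]
  apply re_sqrt_eq_zero_of_notMem_slitPlane
  simp [mem_slitPlane_iff, slitCoord_apply, hx.1, hx.2]

theorem ubar_scalePerp {t : ℝ} (ht : 0 ≤ t) (x : E n) :
    ubar n κ (scalePerp n t x) = t ^ ((1 : ℝ) / 2) * ubar n κ x := by
  simp only [ubar_eq_re_sqrt_comp_slitCoord, Function.comp_apply, slitCoord_scalePerp,
    re_sqrt_real_smul ht, Real.sqrt_eq_rpow]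

end Ubar

section Kappa

variable {n : ℕ} {A : Matrix (Fin (n + 1)) (Fin (n + 1)) ℝ}

theorem kappa_pos (hpos : A.PosDef) : 0 < kappa n A :=
  Real.sqrt_pos.2 (div_pos hpos.diag_pos hpos.diag_pos)

theorem diag_idxN_eq_kappa_sq_mul (hpos : A.PosDef) :
    A (idxN n) (idxN n) = kappa n A ^ 2 * A (idxN1 n) (idxN1 n) := by
  rw [kappa, Real.sq_sqrt (div_pos hpos.diag_pos hpos.diag_pos).le,
    div_mul_cancel₀ _ hpos.diag_pos.ne']

end Kappa

theorem stmt7_general (n : ℕ) (hn : 2 ≤ n) (A : Matrix (Fin (n + 1)) (Fin (n + 1)) ℝ)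
    (hpos : A.PosDef)
    (hoff : ∀ i : Fin (n + 1), (i : ℕ) < n → A i (idxN1 n) = 0 ∧ A (idxN1 n) i = 0) :
    (ContDiffOn ℝ ∞ (ubar n (kappa n A)) (closedSlit n)ᶜ ∧
      ∀ x ∈ (closedSlit n)ᶜ,
        ∑ i, ∑ j, A i j *
          fderiv ℝ (fun y => pd n (ubar n (kappa n A)) j y) x (EuclideanSpace.single i 1)
          = 0) ∧
    ((∀ x ∈ (closedSlit n)ᶜ, 0 < ubar n (kappa n A) x) ∧
      ∀ x ∈ closedSlit n, ubar n (kappa n A) x = 0) ∧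
    (∀ t : ℝ, 0 < t → ∀ x : E n,
      ubar n (kappa n A) (scalePerp n t x) = t ^ ((1 : ℝ) / 2) * ubar n (kappa n A) x) := by
  have hκ := kappa_pos hpos
  have hne : idxN n ≠ idxN1 n := by simp only [idxN, idxN1, ne_eq, Fin.mk.injEq]; omega
  obtain ⟨hAnm, hAmn⟩ := hoff (idxN n) (by simp only [idxN]; omega)
  refine ⟨⟨contDiffOn_ubar hκ, fun x hx => ?_⟩,
    ⟨fun x hx => ubar_pos hκ hx, fun x hx => ubar_eq_zero hx⟩, fun t ht x => ubar_scalePerp ht.le x⟩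
  have hsqrt := analyticAt_sqrt ((slitCoord_mem_slitPlane_iff hκ).2 hx)
  rw [ubar_eq_re_sqrt_comp_slitCoord]
  exact sum_mul_fderiv_pd_comp_slitCoord_eq_zero hsqrt.harmonicAt_re hne
    (diag_idxN_eq_kappa_sq_mul hpos) hAnm hAmn

/-- properties of the homogeneous solution `ū_Ā`.
For a constant symmetric positive-definite matrix `Ā` with vanishing `(i, n+1)` entries
(`i ≤ n`): (i) `ū_Ā` is `C^∞` away from the closed slit and solves `∑ Ā^{ij}∂_i∂_j ū_Ā = 0`
there; (ii) `ū_Ā > 0` off the closed slit and `= 0` on it; (iii) `ū_Ā` is `1/2`-homogeneous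
in `x^⊥`. -/
theorem stmt7 (n : ℕ) (hn : 2 ≤ n) (A : Matrix (Fin (n + 1)) (Fin (n + 1)) ℝ)
    (hsymm : A.IsSymm) (hpos : A.PosDef)
    (hoff : ∀ i : Fin (n + 1), (i : ℕ) < n → A i (idxN1 n) = 0 ∧ A (idxN1 n) i = 0) :
    (ContDiffOn ℝ ∞ (ubar n (kappa n A)) (closedSlit n)ᶜ ∧
      ∀ x ∈ (closedSlit n)ᶜ,
        ∑ i, ∑ j, A i j *
          fderiv ℝ (fun y => pd n (ubar n (kappa n A)) j y) x (EuclideanSpace.single i 1)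
          = 0) ∧
    ((∀ x ∈ (closedSlit n)ᶜ, 0 < ubar n (kappa n A) x) ∧
      ∀ x ∈ closedSlit n, ubar n (kappa n A) x = 0) ∧
    (∀ t : ℝ, 0 < t → ∀ x : E n,
      ubar n (kappa n A) (scalePerp n t x) = t ^ ((1 : ℝ) / 2) * ubar n (kappa n A) x) :=
  stmt7_general n hn A hpos hoff
end
end
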